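/- arXiv:2108.04762 — 4 statements merged into one kernel-verified Lean document; each statement's English description precedes it below -/
import Mathlib

section
/- Let n ≥ 1 and let f be a C^n function on a bounded interval I with |f^{(n)}(x)| ≥ 1 for all x ∈ I. Then there exists a constant C_n > 0 depending only on n such that sup_{x∈I} |f(x)| ≥ C_n |I|^n. -/
/-!
Induct on `n`, starting from `n = 0`. If `|F'| ≥ l` on `[a, b]` with `F = f^{(n)}`, the mean value
theorem makes `F` expand distances by the factor `l`, so `{|F| < l (b - a) / 4}` has diameter
less than `(b - a) / 2` and misses one of the two end quarters of `[a, b]`. On that quarter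
`|f^{(n)}| ≥ l (b - a) / 4`, and the induction hypothesis applies there; each step loses a factor
`4^(n+1)`, whence the constant `4^(-(n+1).choose 2)`.
-/

open Set

theorem iteratedDerivWithin_subset {𝕜 F : Type*} [NontriviallyNormedField 𝕜]
    [NormedAddCommGroup F] [NormedSpace 𝕜 F] {f : 𝕜 → F} {s t : Set 𝕜} {x : 𝕜} {n : ℕ}
    (st : s ⊆ t) (hs : UniqueDiffOn 𝕜 s) (ht : UniqueDiffOn 𝕜 t) (hf : ContDiffOn 𝕜 n f t)
    (hx : x ∈ s) : iteratedDerivWithin n f s x = iteratedDerivWithin n f t x := by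
  simp only [iteratedDerivWithin_eq_iteratedFDerivWithin, iteratedFDerivWithin_subset st hs ht hf hx]

theorem mul_sub_le_abs_sub_of_le_abs_derivWithin {F : ℝ → ℝ} {a b l : ℝ}
    (hF : DifferentiableOn ℝ F (Icc a b)) (hF' : ∀ z ∈ Icc a b, l ≤ |derivWithin F (Icc a b) z|) :
    ∀ x ∈ Icc a b, ∀ y ∈ Icc a b, x ≤ y → l * (y - x) ≤ |F y - F x| := by
  intro x hx y hy hxy
  rcases hxy.eq_or_lt with rfl | hxy
  · simp
  obtain ⟨c, hc, hslope⟩ := exists_hasDerivAt_eq_slope F (derivWithin F (Icc a b)) hxy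
    (hF.continuousOn.mono (Icc_subset_Icc hx.1 hy.2)) fun z hz =>
      (hF z ⟨hx.1.trans hz.1.le, hz.2.le.trans hy.2⟩).hasDerivWithinAt.hasDerivAt
        (Icc_mem_nhds (hx.1.trans_lt hz.1) (hz.2.trans_le hy.2))
  have hyx : 0 < y - x := sub_pos.2 hxy
  calc l * (y - x) ≤ |derivWithin F (Icc a b) c| * (y - x) :=
        mul_le_mul_of_nonneg_right (hF' c ⟨hx.1.trans hc.1.le, hc.2.le.trans hy.2⟩) hyx.le
    _ = |F y - F x| := by rw [hslope, abs_div, abs_of_pos hyx, div_mul_cancel₀ _ hyx.ne']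

theorem exists_Icc_quarter_subset_le_abs {F : ℝ → ℝ} {a b l : ℝ} (hab : a ≤ b)
    (hF : ∀ x ∈ Icc a b, ∀ y ∈ Icc a b, x ≤ y → l * (y - x) ≤ |F y - F x|) :
    ∃ c, Icc c (c + (b - a) / 4) ⊆ Icc a b ∧
      ∀ x ∈ Icc c (c + (b - a) / 4), l * (b - a) / 4 ≤ |F x| := by
  by_contra! h
  obtain ⟨x, hx, hFx⟩ := h a (Icc_subset_Icc le_rfl (by linarith))
  obtain ⟨y, hy, hFy⟩ := h (b - (b - a) / 4) (Icc_subset_Icc (by linarith) (by linarith))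
  have hxy : (b - a) / 2 ≤ y - x := by linarith [hx.2, hy.1]
  have hexp := hF x ⟨hx.1, by linarith [hx.2]⟩ y ⟨by linarith [hy.1], by linarith [hy.2]⟩
    (by linarith)
  have hl : 0 ≤ l := by nlinarith [abs_nonneg (F x)]
  nlinarith [abs_sub (F y) (F x), mul_le_mul_of_nonneg_left hxy hl]

theorem exists_le_abs_of_le_abs_iteratedDerivWithin (n : ℕ) {a b l : ℝ} (hab : a ≤ b)
    {f : ℝ → ℝ} (hf : ContDiffOn ℝ n f (Icc a b))
    (hder : ∀ x ∈ Icc a b, l ≤ |iteratedDerivWithin n f (Icc a b) x|) :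
    ∃ x ∈ Icc a b, l / 4 ^ (n + 1).choose 2 * (b - a) ^ n ≤ |f x| := by
  induction n generalizing a b l with
  | zero => exact ⟨a, left_mem_Icc.2 hab, by simpa using hder a (left_mem_Icc.2 hab)⟩
  | succ n ih =>
    rcases hab.eq_or_lt with rfl | hab
    · exact ⟨a, left_mem_Icc.2 le_rfl, by simp⟩
    have hI : UniqueDiffOn ℝ (Icc a b) := uniqueDiffOn_Icc hab
    have hfn : ContDiffOn ℝ n f (Icc a b) := hf.of_le (by exact_mod_cast n.le_succ)
    obtain ⟨c, hJ, hbig⟩ := exists_Icc_quarter_subset_le_abs hab.le <|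
      mul_sub_le_abs_sub_of_le_abs_derivWithin
        (hf.differentiableOn_iteratedDerivWithin (by exact_mod_cast n.lt_succ_self) hI)
        (by simpa only [iteratedDerivWithin_succ] using hder)
    have hL : 0 < (b - a) / 4 := by linarith
    obtain ⟨x, hx, hfx⟩ := ih (by linarith) (hfn.mono hJ) fun x hx => by
      rw [iteratedDerivWithin_subset hJ (uniqueDiffOn_Icc (by linarith)) hI hfn hx]
      exact hbig x hx
    refine ⟨x, hJ hx, le_of_eq_of_le ?_ hfx⟩
    rw [Nat.choose_succ_succ (n + 1), Nat.choose_one_right, pow_add, add_sub_cancel_left, div_pow,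
      pow_succ]
    field_simp
    ring

theorem stmt2_general (n : ℕ) :
    ∃ C : ℝ, 0 < C ∧ ∀ (a b : ℝ), a ≤ b → ∀ f : ℝ → ℝ,
      ContDiffOn ℝ n f (Set.Icc a b) →
      (∀ x ∈ Set.Icc a b, 1 ≤ |iteratedDerivWithin n f (Set.Icc a b) x|) →
      ∃ x ∈ Set.Icc a b, C * (b - a) ^ n ≤ |f x| :=
  ⟨1 / 4 ^ (n + 1).choose 2, by positivity, fun _ _ hab _ hf hder =>
    exists_le_abs_of_le_abs_iteratedDerivWithin n hab hf hder⟩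

/-- Van der Corput-type sublevel lemma (Christ): if `f` is `C^n` on an interval `I = [a,b]`
with `|f^{(n)}| ≥ 1` on `I`, then `sup_I |f| ≥ C_n |I|^n` with `C_n` depending only on `n`. -/
theorem stmt2 (n : ℕ) (hn : 1 ≤ n) :
    ∃ C : ℝ, 0 < C ∧ ∀ (a b : ℝ), a ≤ b → ∀ f : ℝ → ℝ,
      ContDiffOn ℝ n f (Set.Icc a b) →
      (∀ x ∈ Set.Icc a b, 1 ≤ |iteratedDerivWithin n f (Set.Icc a b) x|) →
      ∃ x ∈ Set.Icc a b, C * (b - a) ^ n ≤ |f x| :=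
  stmt2_general n
end

section
/- Let α₁, α₂ be positive integers and let μ > 0. Define D_j = {(x,y) ∈ [0,1]² : 2^j < x^{α₁} y^{α₂} ≤ 2^{j+1}} for j ∈ ℤ. Then for all f, g, h ∈ L²(ℝ), ∫_{{(x,y)∈[0,1]²: x^{α₁} y^{α₂} ≤ μ}} |f(x) g(y) h(x+y)| dx dy ≤ C μ^{1/(2(α₁+α₂))} ‖f‖₂ ‖g‖₂ ‖h‖₂, where C depends only on α₁ and α₂. -/
/-!
If `x, y ≥ 0` and `x^{α₁} y^{α₂} ≤ μ`, then `min x y ≤ t := μ^{1/(α₁+α₂)}`, so the sublevel set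
lies in the union of the strips `[0,t] × ℝ` and `ℝ × [0,t]`. On the strip `[0,t] × ℝ`,
Cauchy–Schwarz in `y` together with translation invariance bounds the inner integral of
`|g(y) h(x+y)|` by `‖g‖₂ ‖h‖₂`, and Cauchy–Schwarz in `x` gives `∫_{[0,t]} |f| ≤ t^{1/2} ‖f‖₂`;
the other strip is symmetric. Hence `C = 2` works, since `t^{1/2} = μ^{1/(2(α₁+α₂))}`.
-/

open MeasureTheory Set
open scoped ENNReal

section

variable {α E F : Type*} [MeasurableSpace α] {μ : Measure α}
  [NormedAddCommGroup E] [NormedAddCommGroup F] {f : α → E} {g : α → F}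

theorem lintegral_enorm_mul_le_eLpNorm_two_mul (hf : AEStronglyMeasurable f μ)
    (hg : AEStronglyMeasurable g μ) :
    ∫⁻ x, ‖f x‖ₑ * ‖g x‖ₑ ∂μ ≤ eLpNorm f 2 μ * eLpNorm g 2 μ := by
  simpa [eLpNorm_one_eq_lintegral_enorm, enorm_mul] using
    eLpNorm_le_eLpNorm_mul_eLpNorm'_of_norm (r := 1) hf hg (fun a b => ‖a‖ * ‖b‖) 1
      (.of_forall fun x => by simp)

theorem setLIntegral_enorm_le_measure_rpow_mul_eLpNorm_two (hf : AEStronglyMeasurable f μ)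
    (s : Set α) : ∫⁻ x in s, ‖f x‖ₑ ∂μ ≤ μ s ^ (1 / 2 : ℝ) * eLpNorm f 2 μ := by
  calc ∫⁻ x in s, ‖f x‖ₑ ∂μ = eLpNorm f 1 (μ.restrict s) := eLpNorm_one_eq_lintegral_enorm.symm
    _ ≤ eLpNorm f 2 (μ.restrict s) *
          μ.restrict s univ ^ (1 / (1 : ℝ≥0∞).toReal - 1 / (2 : ℝ≥0∞).toReal) :=
      eLpNorm_le_eLpNorm_mul_rpow_measure_univ (by norm_num) hf.restrict
    _ ≤ μ s ^ (1 / 2 : ℝ) * eLpNorm f 2 μ := by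
      rw [mul_comm, Measure.restrict_apply_univ]
      norm_num
      gcongr
      exact Measure.restrict_le_self

end

section

variable {G E F H : Type*} [MeasurableSpace G] [AddGroup G] [MeasurableAdd G]
  {μ : Measure G} [μ.IsAddLeftInvariant]
  [NormedAddCommGroup E] [NormedAddCommGroup F] [NormedAddCommGroup H]
  {f : G → E} {g : G → F} {h : G → H}

theorem lintegral_enorm_mul_enorm_comp_add_left_le (hg : AEStronglyMeasurable g μ)
    (hh : AEStronglyMeasurable h μ) (x : G) :
    ∫⁻ y, ‖g y‖ₑ * ‖h (x + y)‖ₑ ∂μ ≤ eLpNorm g 2 μ * eLpNorm h 2 μ := by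
  have hx := measurePreserving_add_left μ x
  calc ∫⁻ y, ‖g y‖ₑ * ‖h (x + y)‖ₑ ∂μ ≤ eLpNorm g 2 μ * eLpNorm (h ∘ (x + ·)) 2 μ :=
        lintegral_enorm_mul_le_eLpNorm_two_mul hg (hh.comp_measurePreserving hx)
    _ = eLpNorm g 2 μ * eLpNorm h 2 μ := by rw [eLpNorm_comp_measurePreserving hh hx]

theorem lintegral_restrict_prod_trilinear_le (hf : AEStronglyMeasurable f μ)
    (hg : AEStronglyMeasurable g μ) (hh : AEStronglyMeasurable h μ) (s : Set G) :
    ∫⁻ p, ‖f p.1‖ₑ * ‖g p.2‖ₑ * ‖h (p.1 + p.2)‖ₑ ∂(μ.restrict s).prod μ ≤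
      μ s ^ (1 / 2 : ℝ) * (eLpNorm f 2 μ * eLpNorm g 2 μ * eLpNorm h 2 μ) := by
  calc ∫⁻ p, ‖f p.1‖ₑ * ‖g p.2‖ₑ * ‖h (p.1 + p.2)‖ₑ ∂(μ.restrict s).prod μ
      ≤ ∫⁻ x in s, ∫⁻ y, ‖f x‖ₑ * (‖g y‖ₑ * ‖h (x + y)‖ₑ) ∂μ ∂μ := by
        simpa only [mul_assoc] using lintegral_prod_le _
    _ ≤ ∫⁻ x in s, ‖f x‖ₑ * (eLpNorm g 2 μ * eLpNorm h 2 μ) ∂μ := by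
        gcongr with x
        have hgh : AEMeasurable (fun y => ‖g y‖ₑ * ‖h (x + y)‖ₑ) μ :=
          hg.enorm.mul (hh.comp_measurePreserving (measurePreserving_add_left μ x)).enorm
        rw [lintegral_const_mul'' _ hgh]
        gcongr
        exact lintegral_enorm_mul_enorm_comp_add_left_le hg hh x
    _ = (∫⁻ x in s, ‖f x‖ₑ ∂μ) * (eLpNorm g 2 μ * eLpNorm h 2 μ) :=
        lintegral_mul_const'' _ hf.enorm.restrict
    _ ≤ μ s ^ (1 / 2 : ℝ) * eLpNorm f 2 μ * (eLpNorm g 2 μ * eLpNorm h 2 μ) := by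
        gcongr
        exact setLIntegral_enorm_le_measure_rpow_mul_eLpNorm_two hf s
    _ = μ s ^ (1 / 2 : ℝ) * (eLpNorm f 2 μ * eLpNorm g 2 μ * eLpNorm h 2 μ) := by ring

end

section

variable {G E F H : Type*} [MeasurableSpace G] [AddCommGroup G] [MeasurableAdd G]
  {μ : Measure G} [SFinite μ] [μ.IsAddLeftInvariant]
  [NormedAddCommGroup E] [NormedAddCommGroup F] [NormedAddCommGroup H]
  {f : G → E} {g : G → F} {h : G → H}

theorem setLIntegral_union_strips_trilinear_le (hf : AEStronglyMeasurable f μ)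
    (hg : AEStronglyMeasurable g μ) (hh : AEStronglyMeasurable h μ) (s : Set G) :
    ∫⁻ p in s ×ˢ univ ∪ univ ×ˢ s, ‖f p.1‖ₑ * ‖g p.2‖ₑ * ‖h (p.1 + p.2)‖ₑ ∂μ.prod μ ≤
      2 * μ s ^ (1 / 2 : ℝ) * (eLpNorm f 2 μ * eLpNorm g 2 μ * eLpNorm h 2 μ) := by
  set B := μ s ^ (1 / 2 : ℝ) * (eLpNorm f 2 μ * eLpNorm g 2 μ * eLpNorm h 2 μ)
  have vertical :
      ∫⁻ p in s ×ˢ univ, ‖f p.1‖ₑ * ‖g p.2‖ₑ * ‖h (p.1 + p.2)‖ₑ ∂μ.prod μ ≤ B := by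
    rw [← Measure.prod_restrict, Measure.restrict_univ]
    exact lintegral_restrict_prod_trilinear_le hf hg hh s
  have horizontal :
      ∫⁻ p in univ ×ˢ s, ‖f p.1‖ₑ * ‖g p.2‖ₑ * ‖h (p.1 + p.2)‖ₑ ∂μ.prod μ ≤ B := by
    rw [← Measure.prod_restrict, Measure.restrict_univ, ← lintegral_prod_swap]
    simpa [B, add_comm, mul_comm, mul_left_comm] using
      lintegral_restrict_prod_trilinear_le hg hf hh s
  calc _ ≤ _ + _ := lintegral_union_le _ _ _
    _ ≤ B + B := add_le_add vertical horizontal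
    _ = 2 * μ s ^ (1 / 2 : ℝ) * (eLpNorm f 2 μ * eLpNorm g 2 μ * eLpNorm h 2 μ) := by ring

end

theorem le_or_le_rpow_inv_of_pow_mul_pow_le {a b : ℕ} (hab : a + b ≠ 0) {x y μ : ℝ}
    (hx : 0 ≤ x) (hy : 0 ≤ y) (hxy : x ^ a * y ^ b ≤ μ) :
    x ≤ μ ^ ((a + b : ℕ) : ℝ)⁻¹ ∨ y ≤ μ ^ ((a + b : ℕ) : ℝ)⁻¹ := by
  by_contra! ⟨hxt, hyt⟩
  have hμ : 0 ≤ μ := (by positivity : 0 ≤ x ^ a * y ^ b).trans hxy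
  have hmin : μ < min x y ^ (a + b) := by
    conv_lhs => rw [← Real.rpow_inv_natCast_pow hμ hab]
    exact pow_lt_pow_left₀ (lt_min hxt hyt) (by positivity) hab
  have : min x y ^ (a + b) ≤ x ^ a * y ^ b := by
    have := le_min hx hy
    rw [pow_add]
    gcongr
    exacts [min_le_left x y, min_le_right x y]
  linarith

theorem stmt3_general (α₁ α₂ : ℕ) (hα₁ : 1 ≤ α₁) :
    ∃ C : ℝ, 0 < C ∧ ∀ (μ : ℝ), 0 < μ → ∀ f g h : ℝ → ℂ,
      MemLp f 2 volume → MemLp g 2 volume → MemLp h 2 volume →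
      ∫ p in {p : ℝ × ℝ | p ∈ Set.Icc (0:ℝ) 1 ×ˢ Set.Icc (0:ℝ) 1 ∧
          p.1 ^ α₁ * p.2 ^ α₂ ≤ μ},
        ‖f p.1‖ * ‖g p.2‖ * ‖h (p.1 + p.2)‖ ≤
      C * μ ^ (1 / (2 * ((α₁ : ℝ) + (α₂ : ℝ)))) *
        ((eLpNorm f 2 volume).toReal * (eLpNorm g 2 volume).toReal *
          (eLpNorm h 2 volume).toReal) := by
  refine ⟨2, two_pos, fun μ hμ f g h hf hg hh => ?_⟩
  set S := {p : ℝ × ℝ | p ∈ Set.Icc (0:ℝ) 1 ×ˢ Set.Icc (0:ℝ) 1 ∧ p.1 ^ α₁ * p.2 ^ α₂ ≤ μ}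
  set t := μ ^ ((α₁ + α₂ : ℕ) : ℝ)⁻¹
  have hS : S ⊆ Icc 0 t ×ˢ univ ∪ univ ×ˢ Icc 0 t := by
    rintro ⟨x, y⟩ ⟨⟨⟨hx, -⟩, ⟨hy, -⟩⟩, hxy⟩
    rcases le_or_le_rpow_inv_of_pow_mul_pow_le (by omega) hx hy hxy with hxt | hyt
    exacts [Or.inl ⟨⟨hx, hxt⟩, trivial⟩, Or.inr ⟨trivial, hy, hyt⟩]
  have hvol : volume (Icc 0 t) ^ (1 / 2 : ℝ) =
      ENNReal.ofReal (μ ^ (1 / (2 * ((α₁ : ℝ) + (α₂ : ℝ))))) := by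
    rw [Real.volume_Icc, sub_zero, ENNReal.ofReal_rpow_of_nonneg (by positivity) (by norm_num),
      ← Real.rpow_mul hμ.le]
    congr 2
    push_cast
    field_simp
  have hlint := (lintegral_mono_set hS).trans
    (setLIntegral_union_strips_trilinear_le hf.1 hg.1 hh.1 (Icc 0 t) (μ := volume))
  rw [← Measure.volume_eq_prod, hvol] at hlint
  calc ∫ p in S, ‖f p.1‖ * ‖g p.2‖ * ‖h (p.1 + p.2)‖
      ≤ (∫⁻ p in S, ‖f p.1‖ₑ * ‖g p.2‖ₑ * ‖h (p.1 + p.2)‖ₑ).toReal := by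
        refine (Real.le_norm_self _).trans ((norm_integral_le_lintegral_norm _).trans_eq ?_)
        refine congrArg ENNReal.toReal (lintegral_congr fun p => ?_)
        simp only [ofReal_norm, enorm_mul, enorm_norm]
    _ ≤ _ := by
        grw [hlint]
        · simp [ENNReal.toReal_mul, ENNReal.toReal_ofReal, Real.rpow_nonneg hμ.le, mul_assoc]
        · finiteness

/-- Trilinear sublevel set estimate for the monomial `x^{α₁} y^{α₂}` on the unit square:
the integral of `|f(x)g(y)h(x+y)|` over `{x^{α₁} y^{α₂} ≤ μ}` is bounded by
`C μ^{1/(2(α₁+α₂))} ‖f‖₂‖g‖₂‖h‖₂`, with `C` depending only on `α₁, α₂`. -/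
theorem stmt3 (α₁ α₂ : ℕ) (hα₁ : 1 ≤ α₁) (hα₂ : 1 ≤ α₂) :
    ∃ C : ℝ, 0 < C ∧ ∀ (μ : ℝ), 0 < μ → ∀ f g h : ℝ → ℂ,
      MemLp f 2 volume → MemLp g 2 volume → MemLp h 2 volume →
      ∫ p in {p : ℝ × ℝ | p ∈ Set.Icc (0:ℝ) 1 ×ˢ Set.Icc (0:ℝ) 1 ∧
          p.1 ^ α₁ * p.2 ^ α₂ ≤ μ},
        ‖f p.1‖ * ‖g p.2‖ * ‖h (p.1 + p.2)‖ ≤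
      C * μ ^ (1 / (2 * ((α₁ : ℝ) + (α₂ : ℝ)))) *
        ((eLpNorm f 2 volume).toReal * (eLpNorm g 2 volume).toReal *
          (eLpNorm h 2 volume).toReal) :=
  stmt3_general α₁ α₂ hα₁
end

section
/- Let α₂ be a positive integer and μ ∈ (0,1]. Then for all f, g, h ∈ L²(ℝ), ∫_{{(x,y)∈[0,1]² : y^{α₂} ≤ μ}} |f(x) g(y) h(x+y)| dx dy ≤ C μ^{1/(2α₂)} ‖f‖₂ ‖g‖₂ ‖h‖₂, where C depends only on α₂. -/
/-
Cauchy–Schwarz in `x`, together with translation invariance of Lebesgue measure, bounds the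
inner integral `∫ |f(x) h(x + y)| dx` by `‖f‖₂ ‖h‖₂` uniformly in `y`. The sublevel set lies in
the strip `0 ≤ y ≤ μ^{1/α₂}`, and Cauchy–Schwarz over that interval gives
`∫₀^{μ^{1/α₂}} |g| ≤ μ^{1/(2α₂)} ‖g‖₂`; Tonelli combines the two bounds, with `C = 1`.
-/

open MeasureTheory Set
open scoped ENNReal

namespace MeasureTheory

section Holder

variable {α F : Type*} [MeasurableSpace α] [NormedAddCommGroup F] {ν : Measure α} {g : α → F}

theorem setLIntegral_enorm_le_measure_rpow_mul_eLpNorm (hg : AEStronglyMeasurable g ν)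
    (T : Set α) : ∫⁻ y in T, ‖g y‖ₑ ∂ν ≤ ν T ^ (1 / 2 : ℝ) * eLpNorm g 2 ν := by
  have holder := eLpNorm_le_eLpNorm_mul_rpow_measure_univ (p := 1) (q := 2) one_le_two
    (f := g) (μ := ν.restrict T) hg.restrict
  norm_num [eLpNorm_one_eq_lintegral_enorm] at holder
  calc _ ≤ _ := holder
    _ ≤ eLpNorm g 2 ν * ν T ^ (1 / 2 : ℝ) := by
      gcongr ?_ * _
      exact eLpNorm_restrict_le g 2 ν T
    _ = _ := mul_comm _ _

end Holder

section Trilinear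

variable {G E F E' : Type*} [MeasurableSpace G] [AddGroup G] [MeasurableAdd₂ G]
  [NormedAddCommGroup E] [NormedAddCommGroup F] [NormedAddCommGroup E']
  {μ ν : Measure G} {f : G → E} {g : G → F} {h : G → E'}

theorem lintegral_enorm_mul_enorm_add_right_le [μ.IsAddRightInvariant]
    (hf : AEStronglyMeasurable f μ) (hh : AEStronglyMeasurable h μ) (y : G) :
    ∫⁻ x, ‖f x‖ₑ * ‖h (x + y)‖ₑ ∂μ ≤ eLpNorm f 2 μ * eLpNorm h 2 μ := by
  have hmp : MeasurePreserving (· + y) μ μ := measurePreserving_add_right μ y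
  have htrans : eLpNorm (h ∘ (· + y)) 2 μ = eLpNorm h 2 μ :=
    eLpNorm_comp_measurePreserving hh hmp
  have holder := eLpNorm_le_eLpNorm_mul_eLpNorm_of_nnnorm (p := 2) (q := 2) (r := 1) hf
    (hh.comp_quasiMeasurePreserving hmp.quasiMeasurePreserving) (fun u v => ‖u‖ * ‖v‖) 1
    (Filter.Eventually.of_forall fun x => by simp)
  simpa [eLpNorm_one_eq_lintegral_enorm, enorm_mul, htrans] using holder

theorem lintegral_prod_enorm_mul_mul_enorm_add_le [SFinite μ] [SFinite ν] [μ.IsAddRightInvariant]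
    (hf : AEStronglyMeasurable f μ) (hg : AEStronglyMeasurable g ν)
    (hh : AEStronglyMeasurable h μ) :
    ∫⁻ p, ‖f p.1‖ₑ * ‖g p.2‖ₑ * ‖h (p.1 + p.2)‖ₑ ∂μ.prod ν ≤
      (∫⁻ y, ‖g y‖ₑ ∂ν) * (eLpNorm f 2 μ * eLpNorm h 2 μ) := by
  rw [← lintegral_prod_swap]
  calc _ ≤ ∫⁻ y, ∫⁻ x, ‖f x‖ₑ * ‖g y‖ₑ * ‖h (x + y)‖ₑ ∂μ ∂ν := lintegral_prod_le _
    _ = ∫⁻ y, ‖g y‖ₑ * ∫⁻ x, ‖f x‖ₑ * ‖h (x + y)‖ₑ ∂μ ∂ν := by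
      refine lintegral_congr fun y => ?_
      rw [← lintegral_const_mul' _ _ enorm_ne_top]
      exact lintegral_congr fun x => by ring
    _ ≤ ∫⁻ y, ‖g y‖ₑ * (eLpNorm f 2 μ * eLpNorm h 2 μ) ∂ν := by
      gcongr with y
      exact lintegral_enorm_mul_enorm_add_right_le hf hh y
    _ = _ := lintegral_mul_const'' _ hg.enorm

theorem setLIntegral_univ_prod_enorm_mul_mul_enorm_add_le [SFinite μ] [SFinite ν]
    [μ.IsAddRightInvariant] (hf : AEStronglyMeasurable f μ) (hg : AEStronglyMeasurable g ν)
    (hh : AEStronglyMeasurable h μ) (T : Set G) :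
    ∫⁻ p in univ ×ˢ T, ‖f p.1‖ₑ * ‖g p.2‖ₑ * ‖h (p.1 + p.2)‖ₑ ∂μ.prod ν ≤
      ν T ^ (1 / 2 : ℝ) * (eLpNorm f 2 μ * eLpNorm g 2 ν * eLpNorm h 2 μ) := by
  rw [← Measure.prod_restrict, Measure.restrict_univ]
  calc _ ≤ (∫⁻ y in T, ‖g y‖ₑ ∂ν) * (eLpNorm f 2 μ * eLpNorm h 2 μ) :=
        lintegral_prod_enorm_mul_mul_enorm_add_le hf hg.restrict hh
    _ ≤ ν T ^ (1 / 2 : ℝ) * eLpNorm g 2 ν * (eLpNorm f 2 μ * eLpNorm h 2 μ) := by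
        gcongr
        exact setLIntegral_enorm_le_measure_rpow_mul_eLpNorm hg T
    _ = _ := by ring

end Trilinear

end MeasureTheory

/-- Degenerate trilinear sublevel set estimate: for the monomial `y^{α₂}`,
the integral of `|f(x)g(y)h(x+y)|` over `{(x,y) ∈ [0,1]² : y^{α₂} ≤ μ}` is bounded by
`C μ^{1/(2α₂)} ‖f‖₂‖g‖₂‖h‖₂`, with `C` depending only on `α₂`. -/
theorem stmt4 (α₂ : ℕ) (hα₂ : 1 ≤ α₂) :
    ∃ C : ℝ, 0 < C ∧ ∀ (μ : ℝ), 0 < μ → μ ≤ 1 → ∀ f g h : ℝ → ℂ,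
      MemLp f 2 volume → MemLp g 2 volume → MemLp h 2 volume →
      ∫ p in {p : ℝ × ℝ | p ∈ Set.Icc (0:ℝ) 1 ×ˢ Set.Icc (0:ℝ) 1 ∧ p.2 ^ α₂ ≤ μ},
        ‖f p.1‖ * ‖g p.2‖ * ‖h (p.1 + p.2)‖ ≤
      C * μ ^ (1 / (2 * (α₂ : ℝ))) *
        ((eLpNorm f 2 volume).toReal * (eLpNorm g 2 volume).toReal *
          (eLpNorm h 2 volume).toReal) := by
  refine ⟨1, one_pos, fun μ hμ _ f g h hf hg hh => ?_⟩
  have hα₂_pos : (0 : ℝ) < α₂ := by exact_mod_cast hα₂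
  set S := {p : ℝ × ℝ | p ∈ Set.Icc (0:ℝ) 1 ×ˢ Set.Icc (0:ℝ) 1 ∧ p.2 ^ α₂ ≤ μ}
  set β := μ ^ (α₂ : ℝ)⁻¹
  have hS : S ⊆ univ ×ˢ Icc 0 β := by
    rintro ⟨_, y⟩ ⟨⟨-, hy⟩, hpow⟩
    refine ⟨trivial, hy.1, (Real.le_rpow_inv_iff_of_pos hy.1 hμ.le hα₂_pos).2 ?_⟩
    rwa [Real.rpow_natCast]
  have hbound := (lintegral_mono_set hS).trans
    (Measure.volume_eq_prod ℝ ℝ ▸ setLIntegral_univ_prod_enorm_mul_mul_enorm_add_le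
      hf.1 hg.1 hh.1 (Icc 0 β))
  have hfinite : volume (Icc 0 β) ^ (1 / 2 : ℝ) *
      (eLpNorm f 2 volume * eLpNorm g 2 volume * eLpNorm h 2 volume) ≠ ⊤ := by
    simp [ENNReal.mul_eq_top, hf.eLpNorm_ne_top, hg.eLpNorm_ne_top, hh.eLpNorm_ne_top]
  calc _ ≤ (∫⁻ p in S, ‖f p.1‖ₑ * ‖g p.2‖ₑ * ‖h (p.1 + p.2)‖ₑ).toReal := by
        refine (Real.le_norm_self _).trans ((norm_integral_le_lintegral_norm _).trans_eq ?_)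
        simp only [ofReal_norm, enorm_mul, enorm_norm]
    _ ≤ _ := ENNReal.toReal_mono hfinite hbound
    _ = _ := by
        have hexp : (α₂ : ℝ)⁻¹ * (1 / 2) = 1 / (2 * α₂) := by ring
        rw [Real.volume_Icc, sub_zero, ENNReal.toReal_mul, ← ENNReal.toReal_rpow,
          ENNReal.toReal_ofReal (by positivity), ← Real.rpow_mul hμ.le, hexp, one_mul]
        simp only [ENNReal.toReal_mul]
end

section
/- Let H : ℝ² → ℝ be a polynomial of degree at most n that is not identically zero, and suppose for some multi-index (α,β) the mixed partial ∂_x^α ∂_y^β H is a nonzero constant with |∂_x^α ∂_y^β H| ≥ 1 on [0,1]². Then for any axis-parallel rectangle R ⊆ [0,1]² of dimensions r₁ × r₂, sup_{(x,y)∈R} |H(x,y)| ≥ C r₁^α r₂^β, where C > 0 depends only on α and β. -/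
/-!
Take steps `h₁ = r₁ / (α + 1)`, `h₂ = r₂ / (β + 1)`, so that the grid
`(x₀ + k h₁, y₀ + l h₂)`, `k ≤ α`, `l ≤ β`, lies in the rectangle. Since `∂_x^α ∂_y^β H = c`,
the only monomial of `H` that survives the mixed finite difference `Δ_{h₁}^α Δ_{h₂}^β` is
`x^α y^β`, whence `Δ_{h₁}^α Δ_{h₂}^β H (x₀, y₀) = c h₁^α h₂^β`. The left side is a
combination of the values of `H` on the grid with binomial weights of total mass `2^α 2^β`, so
some grid value has `|H| ≥ |c| (h₁ / 2)^α (h₂ / 2)^β`, and `|c| ≥ 1`.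
-/

open MvPolynomial Finset

section FwdDiffNorm

variable {M G : Type*} [AddCommMonoid M] [SeminormedAddCommGroup G]

theorem norm_fwdDiff_iter_le (h : M) (f : M → G) (n : ℕ) (x : M) {C : ℝ}
    (hf : ∀ k ≤ n, ‖f (x + k • h)‖ ≤ C) : ‖(fwdDiff h)^[n] f x‖ ≤ 2 ^ n * C := by
  have h2 : (2 : ℝ) ^ n = ∑ k ∈ range (n + 1), (n.choose k : ℝ) := by
    exact_mod_cast (Nat.sum_range_choose n).symm
  rw [fwdDiff_iter_eq_sum_shift, h2, sum_mul]
  refine (norm_sum_le _ _).trans (sum_le_sum fun k hk => ?_)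
  have hk : k ≤ n := Nat.lt_succ_iff.mp (mem_range.mp hk)
  calc ‖((-1 : ℤ) ^ (n - k) * n.choose k) • f (x + k • h)‖
      ≤ ‖((-1 : ℤ) ^ (n - k) * n.choose k)‖ * ‖f (x + k • h)‖ := norm_zsmul_le _ _
    _ ≤ n.choose k * C := by
      rw [norm_mul, norm_pow, norm_neg, norm_one, one_pow, one_mul, Int.norm_natCast]
      exact mul_le_mul_of_nonneg_left (hf k hk) (Nat.cast_nonneg _)

theorem exists_norm_fwdDiff_iter_le (h : M) (f : M → G) (n : ℕ) (x : M) :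
    ∃ k ≤ n, ‖(fwdDiff h)^[n] f x‖ ≤ 2 ^ n * ‖f (x + k • h)‖ := by
  obtain ⟨k, hk, hmax⟩ := (range (n + 1)).exists_max_image (fun k => ‖f (x + k • h)‖)
    nonempty_range_add_one
  exact ⟨k, Nat.lt_succ_iff.mp (mem_range.mp hk),
    norm_fwdDiff_iter_le h f n x fun j hj => hmax j (mem_range.mpr (Nat.lt_succ_of_le hj))⟩

theorem exists_norm_fwdDiff_iter_fwdDiff_iter_le {N : Type*} [AddCommMonoid N]
    (h₁ : M) (h₂ : N) (F : M → N → G) (a b : ℕ) (x : M) (y : N) :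
    ∃ k ≤ a, ∃ l ≤ b, ‖(fwdDiff h₁)^[a] (fun x' => (fwdDiff h₂)^[b] (F x') y) x‖
      ≤ 2 ^ a * 2 ^ b * ‖F (x + k • h₁) (y + l • h₂)‖ := by
  obtain ⟨k, hk, hx⟩ := exists_norm_fwdDiff_iter_le h₁ (fun x' => (fwdDiff h₂)^[b] (F x') y) a x
  obtain ⟨l, hl, hy⟩ := exists_norm_fwdDiff_iter_le h₂ (F (x + k • h₁)) b y
  refine ⟨k, hk, l, hl, ?_⟩
  calc _ ≤ 2 ^ a * ‖(fwdDiff h₂)^[b] (F (x + k • h₁)) y‖ := hx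
    _ ≤ 2 ^ a * (2 ^ b * ‖F (x + k • h₁) (y + l • h₂)‖) := by gcongr
    _ = _ := by ring

end FwdDiffNorm

section FwdDiffField

variable {R : Type*} [Field R]

theorem fwdDiff_iter_apply_mul_eq (h : R) (f : R → R) (n : ℕ) (s : R) :
    (fwdDiff h)^[n] f (h * s) = (fwdDiff 1)^[n] (fun t => f (h * t)) s := by
  simp [fwdDiff_iter_eq_sum_shift, mul_add, mul_comm]

theorem fwdDiff_iter_pow_apply_eq_zero_of_lt {h : R} (hh : h ≠ 0) {j n : ℕ} (hjn : j < n)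
    (x : R) :
    (fwdDiff h)^[n] (fun t => t ^ j) x = 0 := by
  rw [← mul_div_cancel₀ x hh, fwdDiff_iter_apply_mul_eq]
  have : (fun t : R => (h * t) ^ j) = h ^ j • fun t => t ^ j := by
    funext t; simp [mul_pow]
  rw [this, fwdDiff_iter_const_smul, fwdDiff_iter_pow_eq_zero_of_lt hjn, smul_zero, Pi.zero_apply]

theorem fwdDiff_iter_pow_apply_eq_factorial_mul {h : R} (hh : h ≠ 0) (n : ℕ) (x : R) :
    (fwdDiff h)^[n] (fun t => t ^ n) x = n.factorial * h ^ n := by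
  rw [← mul_div_cancel₀ x hh, fwdDiff_iter_apply_mul_eq]
  have : (fun t : R => (h * t) ^ n) = h ^ n • fun t => t ^ n := by
    funext t; simp [mul_pow]
  rw [this, fwdDiff_iter_const_smul, fwdDiff_iter_eq_factorial, Pi.smul_apply, smul_eq_mul,
    Pi.natCast_apply, mul_comm]

end FwdDiffField

section FwdDiffSum

variable {M N R : Type*} [AddCommMonoid M] [AddCommMonoid N] [CommRing R]

theorem fwdDiff_iter_sum_mul {ι : Type*} (h : M) (s : Finset ι) (c : ι → R) (f : ι → M → R)
    (n : ℕ) (x : M) :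
    (fwdDiff h)^[n] (fun t => ∑ i ∈ s, c i * f i t) x
      = ∑ i ∈ s, c i * (fwdDiff h)^[n] (f i) x := by
  have : (fun t => ∑ i ∈ s, c i * f i t) = ∑ i ∈ s, c i • f i := by
    funext t; simp
  simp [this, fwdDiff_iter_finsetSum, fwdDiff_iter_const_smul]

theorem fwdDiff_iter_fwdDiff_iter_sum_mul {ι : Type*} (h₁ : M) (h₂ : N) (s : Finset ι)
    (c : ι → R) (f : ι → M → R) (g : ι → N → R) (a b : ℕ) (x₀ : M) (y₀ : N) :
    (fwdDiff h₁)^[a] (fun x => (fwdDiff h₂)^[b] (fun y => ∑ i ∈ s, c i * f i x * g i y) y₀) x₀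
      = ∑ i ∈ s, c i * (fwdDiff h₁)^[a] (f i) x₀ * (fwdDiff h₂)^[b] (g i) y₀ := by
  have inner : ∀ x, (fwdDiff h₂)^[b] (fun y => ∑ i ∈ s, c i * f i x * g i y) y₀
      = ∑ i ∈ s, c i * (fwdDiff h₂)^[b] (g i) y₀ * f i x := fun x => by
    rw [fwdDiff_iter_sum_mul]
    exact sum_congr rfl fun i _ => by ring
  simp_rw [inner, fwdDiff_iter_sum_mul]
  exact sum_congr rfl fun i _ => by ring

end FwdDiffSum

section IteratedPDeriv

open Finsupp

variable {R σ : Type*} [CommSemiring R]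

theorem coeff_iterate_pderiv (i : σ) (n : ℕ) (p : MvPolynomial σ R) (m : σ →₀ ℕ) :
    coeff m ((pderiv i)^[n] p) = coeff (m + single i n) p * (m i + n).descFactorial n := by
  induction n generalizing m with
  | zero => simp
  | succ n ih =>
    rw [Function.iterate_succ_apply', coeff_pderiv, ih, add_assoc, ← single_add,
      Finsupp.add_apply, single_eq_same, add_comm 1 n, ← add_assoc, Nat.descFactorial_succ,
      show m i + n + 1 - n = m i + 1 by omega, add_right_comm]
    push_cast
    ring

theorem coeff_iterate_pderiv_iterate_pderiv {i j : σ} (hij : i ≠ j) (a b : ℕ)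
    (p : MvPolynomial σ R) (m : σ →₀ ℕ) :
    coeff m ((pderiv i)^[a] ((pderiv j)^[b] p))
      = coeff (m + single i a + single j b) p
        * ((m i + a).descFactorial a * (m j + b).descFactorial b) := by
  rw [coeff_iterate_pderiv, coeff_iterate_pderiv, Finsupp.add_apply, single_eq_of_ne hij.symm,
    add_zero]
  ring

variable {i j : σ} {a b : ℕ} {p : MvPolynomial σ R} {c : R}

theorem coeff_mul_factorial_of_iterate_pderiv_eq_C (hij : i ≠ j)
    (hc : (pderiv i)^[a] ((pderiv j)^[b] p) = C c) :
    coeff (single i a + single j b) p * (a.factorial * b.factorial) = c := by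
  simpa [coeff_iterate_pderiv_iterate_pderiv hij, Nat.descFactorial_self] using
    congrArg (coeff 0) hc

theorem coeff_eq_zero_of_iterate_pderiv_eq_C [NoZeroDivisors R] [CharZero R] (hij : i ≠ j)
    (hc : (pderiv i)^[a] ((pderiv j)^[b] p) = C c) {m : σ →₀ ℕ}
    (hle : single i a + single j b ≤ m) (hne : m ≠ single i a + single j b) :
    coeff m p = 0 := by
  classical
  obtain ⟨m', rfl⟩ := exists_add_of_le hle
  have hm' : m' ≠ 0 := by rintro rfl; exact hne (add_zero _)
  have := congrArg (coeff m') hc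
  rw [coeff_iterate_pderiv_iterate_pderiv hij, coeff_C, if_neg (Ne.symm hm'), add_assoc,
    add_comm m'] at this
  simpa [Nat.descFactorial_eq_zero_iff_lt] using this

end IteratedPDeriv

theorem fwdDiff_iter_fwdDiff_iter_eval {R : Type*} [Field R] [CharZero R] (H : MvPolynomial (Fin 2) R) {a b : ℕ}
    {c : R} (hc : (pderiv 0)^[a] ((pderiv 1)^[b] H) = C c) {h₁ h₂ : R} (hh₁ : h₁ ≠ 0)
    (hh₂ : h₂ ≠ 0) (x₀ y₀ : R) :
    (fwdDiff h₁)^[a] (fun x => (fwdDiff h₂)^[b] (fun y => eval ![x, y] H) y₀) x₀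
      = c * h₁ ^ a * h₂ ^ b := by
  have hH : ∀ x y, eval ![x, y] H = ∑ m ∈ H.support, coeff m H * x ^ m 0 * y ^ m 1 := by
    intro x y
    simp [eval_eq', Fin.prod_univ_two, mul_assoc]
  simp_rw [hH]
  rw [fwdDiff_iter_fwdDiff_iter_sum_mul, sum_eq_single (Finsupp.single 0 a + Finsupp.single 1 b)]
  · simp only [Finsupp.add_apply, Finsupp.single_eq_same, Finsupp.single_eq_of_ne zero_ne_one,
      Finsupp.single_eq_of_ne one_ne_zero, add_zero, zero_add,
      fwdDiff_iter_pow_apply_eq_factorial_mul hh₁, fwdDiff_iter_pow_apply_eq_factorial_mul hh₂]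
    rw [← coeff_mul_factorial_of_iterate_pderiv_eq_C zero_ne_one hc]
    ring
  · intro m _ hm
    by_cases hma : m 0 < a
    · rw [fwdDiff_iter_pow_apply_eq_zero_of_lt hh₁ hma, mul_zero, zero_mul]
    by_cases hmb : m 1 < b
    · rw [fwdDiff_iter_pow_apply_eq_zero_of_lt hh₂ hmb, mul_zero]
    have hle : Finsupp.single 0 a + Finsupp.single 1 b ≤ m := by
      rw [Finsupp.le_def, Fin.forall_fin_two]
      simp only [Finsupp.add_apply, Finsupp.single_eq_same, Finsupp.single_eq_of_ne zero_ne_one,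
        Finsupp.single_eq_of_ne one_ne_zero]
      omega
    rw [coeff_eq_zero_of_iterate_pderiv_eq_C zero_ne_one hc hle hm, zero_mul, zero_mul]
  · intro hnot
    rw [notMem_support_iff.mp hnot, zero_mul, zero_mul]

theorem add_nat_mul_div_mem_Icc {K : Type*} [Field K] [LinearOrder K] [IsStrictOrderedRing K]
    (x : K) {r : K} (hr : 0 ≤ r) {k n : ℕ} (hk : k ≤ n) :
    x + k * (r / (n + 1)) ∈ Set.Icc x (x + r) := by
  have hkn : (k : K) ≤ n + 1 := by exact_mod_cast hk.trans n.le_succ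
  refine ⟨le_add_of_nonneg_right (by positivity), (add_le_add_iff_left x).mpr ?_⟩
  calc (k : K) * (r / (n + 1)) ≤ (n + 1) * (r / (n + 1)) := by gcongr
    _ = r := mul_div_cancel₀ r (by positivity)

/-- Lower bound for a polynomial on a rectangle: if some mixed partial `∂_x^α ∂_y^β H`
satisfies `|∂_x^α ∂_y^β H| ≥ 1` on `[0,1]²` (and is a nonzero constant polynomial), then for
every axis-parallel rectangle `R ⊆ [0,1]²` of dimensions `r₁ × r₂` one has
`sup_R |H| ≥ C r₁^α r₂^β` with `C` depending only on `α, β`. -/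
theorem stmt13 (α β : ℕ) :
    ∃ C : ℝ, 0 < C ∧ ∀ (n : ℕ) (H : MvPolynomial (Fin 2) ℝ), H ≠ 0 →
      H.totalDegree ≤ n →
      (∃ c : ℝ, c ≠ 0 ∧
        ((fun P => pderiv (0 : Fin 2) P)^[α] ((fun P => pderiv (1 : Fin 2) P)^[β] H)) =
          MvPolynomial.C c) →
      (∀ x y : ℝ, x ∈ Set.Icc (0:ℝ) 1 → y ∈ Set.Icc (0:ℝ) 1 →
        1 ≤ |MvPolynomial.eval ![x, y]
          ((fun P => pderiv (0 : Fin 2) P)^[α] ((fun P => pderiv (1 : Fin 2) P)^[β] H))|) →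
      ∀ (x₀ y₀ r₁ r₂ : ℝ), 0 < r₁ → 0 < r₂ →
        Set.Icc x₀ (x₀ + r₁) ×ˢ Set.Icc y₀ (y₀ + r₂) ⊆
          Set.Icc (0:ℝ) 1 ×ˢ Set.Icc (0:ℝ) 1 →
        ∃ x y : ℝ, (x, y) ∈ Set.Icc x₀ (x₀ + r₁) ×ˢ Set.Icc y₀ (y₀ + r₂) ∧
          C * r₁ ^ α * r₂ ^ β ≤ |MvPolynomial.eval ![x, y] H| := by
  refine ⟨(2 * (α + 1 : ℝ))⁻¹ ^ α * (2 * (β + 1 : ℝ))⁻¹ ^ β, by positivity, ?_⟩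
  rintro n H - - ⟨c, -, hc⟩ hlow x₀ y₀ r₁ r₂ hr₁ hr₂ -
  have hc1 : 1 ≤ |c| := by simpa [hc] using hlow 0 0 (by simp) (by simp)
  set h₁ := r₁ / (α + 1)
  set h₂ := r₂ / (β + 1)
  have hh₁ : 0 < h₁ := by positivity
  have hh₂ : 0 < h₂ := by positivity
  obtain ⟨k, hk, l, hl, hkl⟩ := exists_norm_fwdDiff_iter_fwdDiff_iter_le h₁ h₂
    (fun x y => eval ![x, y] H) α β x₀ y₀
  rw [fwdDiff_iter_fwdDiff_iter_eval H hc hh₁.ne' hh₂.ne', nsmul_eq_mul, nsmul_eq_mul] at hkl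
  simp only [Real.norm_eq_abs, abs_mul, abs_pow, abs_of_pos hh₁, abs_of_pos hh₂] at hkl
  refine ⟨x₀ + k * h₁, y₀ + l * h₂,
    ⟨add_nat_mul_div_mem_Icc x₀ hr₁.le hk, add_nat_mul_div_mem_Icc y₀ hr₂.le hl⟩, ?_⟩
  calc (2 * (α + 1 : ℝ))⁻¹ ^ α * (2 * (β + 1 : ℝ))⁻¹ ^ β * r₁ ^ α * r₂ ^ β
      = h₁ ^ α * h₂ ^ β / (2 ^ α * 2 ^ β) := by
        simp only [h₁, h₂, div_pow, mul_pow, inv_pow]; field_simp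
    _ ≤ |c| * h₁ ^ α * h₂ ^ β / (2 ^ α * 2 ^ β) := by
        gcongr
        exact le_mul_of_one_le_left (by positivity) hc1
    _ ≤ |eval ![x₀ + k * h₁, y₀ + l * h₂] H| := by
        rw [div_le_iff₀ (by positivity)]; linarith
end
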